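/- Let R be a commutative ring with 1 and τ a refinable symmetric relation on R#, and suppose R is τ-complete (every nonunit has a τ-complete factorization). If R is a τ-complete-BFR, then R satisfies τ-ACCP. -/

import Mathlib

/-!
Refining every factor of a τ-factorization of `a` by a τ-complete factorization gives, by
refinability, a τ-factorization of `a` which is again τ-complete: a longer refinement would have to
lengthen the factorization of some single factor. Hence all τ-factorizations of `a` have length at
most `N(a)`. Along a chain `a₀, a₁, …` with `aᵢ₊₁ |_τ aᵢ`, substituting the factorization of `aᵢ`
that contains `aᵢ₊₁` produces τ-factorizations of `a₀` containing `aᵢ`, whose length grows by one at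
every strict step of the chain of ideals; so there are only finitely many strict steps.
-/

variable {R : Type*} [CommRing R]

/-- A τ-factorization of `a`: `a = u * (a₁ ⋯ aₙ)` with `u` a unit, each factor a
nonunit, and distinct factors pairwise τ-related. -/
def IsTauFact (τ : R → R → Prop) (a : R) (l : List R) : Prop :=
  l ≠ [] ∧ (∀ b ∈ l, ¬ IsUnit b) ∧ l.Pairwise τ ∧ ∃ u : Rˣ, a = u * l.prod

/-- `l'` is obtained from `l` by replacing each entry by a τ-factorization of it. -/
def IsRefinement (τ : R → R → Prop) (l l' : List R) : Prop :=
  ∃ L : List (List R), List.Forall₂ (IsTauFact τ) l L ∧ l' = L.flatten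

/-- A τ-complete factorization: a τ-factorization admitting no strictly longer
τ-refinement which is itself a τ-factorization. -/
def IsTauComplete (τ : R → R → Prop) (a : R) (l : List R) : Prop :=
  IsTauFact τ a l ∧
    ∀ l', IsRefinement τ l l' → IsTauFact τ a l' → l'.length ≤ l.length

/-- τ is refinable: every τ-refinement of a τ-factorization is a τ-factorization. -/
def Refinable (τ : R → R → Prop) : Prop :=
  ∀ (a : R) (l l' : List R), IsTauFact τ a l → IsRefinement τ l l' → IsTauFact τ a l'

/-- τ-unrefinably irreducible: a nonunit with only trivial τ-factorizations. -/
def UnrefIrred (τ : R → R → Prop) (a : R) : Prop :=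
  ¬ IsUnit a ∧ ∀ l, IsTauFact τ a l → l.length = 1

variable {τ : R → R → Prop}

theorem IsTauFact.not_isUnit {a : R} {l : List R} (h : IsTauFact τ a l) : ¬ IsUnit a := by
  obtain ⟨hne, hnu, -, u, rfl⟩ := h
  obtain ⟨b, t, rfl⟩ := List.exists_cons_of_ne_nil hne
  intro hu
  exact hnu b List.mem_cons_self <|
    isUnit_of_dvd_unit (List.dvd_prod List.mem_cons_self) (isUnit_of_mul_isUnit_right hu)

theorem IsTauFact.singleton {b : R} (hb : ¬ IsUnit b) : IsTauFact τ b [b] :=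
  ⟨List.cons_ne_nil _ _, by simpa using hb, List.pairwise_singleton _ _, 1, by simp⟩

theorem IsTauFact.two_le_length {b c : R} {m : List R} (h : IsTauFact τ b m) (hc : c ∈ m)
    (hcb : ¬ Ideal.span {c} ≤ Ideal.span {b}) : 2 ≤ m.length := by
  by_contra! hm
  obtain ⟨d, rfl⟩ := List.length_eq_one_iff.mp <|
    le_antisymm (Nat.le_of_lt_succ hm) (List.length_pos_iff.mpr h.1)
  obtain rfl := List.mem_singleton.mp hc
  obtain ⟨u, hu⟩ := h.2.2.2
  refine hcb (Ideal.span_singleton_le_span_singleton.mpr ⟨(u⁻¹ : Rˣ), ?_⟩)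
  rw [hu, List.prod_singleton, mul_comm, ← mul_assoc, Units.inv_mul, one_mul]

namespace IsRefinement

theorem exists_prod_eq_unit_mul {l l' : List R} (h : IsRefinement τ l l') :
    ∃ u : Rˣ, l.prod = u * l'.prod := by
  obtain ⟨M, hM, rfl⟩ := h
  induction hM with
  | nil => exact ⟨1, by simp⟩
  | cons hb _ ih =>
    obtain ⟨u, hu⟩ := hb.2.2.2
    obtain ⟨v, hv⟩ := ih
    exact ⟨u * v, by simp only [List.prod_cons, List.flatten_cons, List.prod_append, hu, hv,
      Units.val_mul]; ring⟩

theorem length_le {l l' : List R} (h : IsRefinement τ l l') : l.length ≤ l'.length := by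
  obtain ⟨M, hM, rfl⟩ := h
  induction hM with
  | nil => simp
  | cons hb _ ih =>
    have := List.length_pos_iff.mpr hb.1
    simp only [List.length_cons, List.flatten_cons, List.length_append]
    omega

theorem refl {l : List R} (hl : ∀ b ∈ l, ¬ IsUnit b) : IsRefinement τ l l :=
  ⟨l.map ([·]), List.forall₂_map_right_iff.mpr <|
    List.forall₂_same.mpr fun b hb => IsTauFact.singleton (hl b hb),
    by rw [← List.flatMap_def, List.flatMap_singleton']⟩

theorem of_isTauFact {b : R} {m : List R} (h : IsTauFact τ b m) : IsRefinement τ [b] m :=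
  ⟨[m], List.Forall₂.cons h List.Forall₂.nil, by simp⟩

end IsRefinement

theorem isRefinement_append_left_iff {l₁ l₂ l' : List R} :
    IsRefinement τ (l₁ ++ l₂) l' ↔
      ∃ l₁' l₂', l' = l₁' ++ l₂' ∧ IsRefinement τ l₁ l₁' ∧ IsRefinement τ l₂ l₂' := by
  constructor
  · rintro ⟨M, hM, rfl⟩
    refine ⟨(M.take l₁.length).flatten, (M.drop l₁.length).flatten, ?_, ⟨_, ?_, rfl⟩, ⟨_, ?_, rfl⟩⟩
    · rw [← List.flatten_append, List.take_append_drop]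
    · simpa using List.forall₂_take l₁.length hM
    · simpa using List.forall₂_drop l₁.length hM
  · rintro ⟨l₁', l₂', rfl, ⟨M₁, hM₁, rfl⟩, ⟨M₂, hM₂, rfl⟩⟩
    exact ⟨M₁ ++ M₂, List.rel_append hM₁ hM₂, List.flatten_append.symm⟩

/-- The half of τ-completeness that does not mention the product, so that it passes to
concatenations of factorizations. -/
def IsTauRigid (τ : R → R → Prop) (l : List R) : Prop :=
  ∀ l', IsRefinement τ l l' → (∀ x ∈ l', ¬ IsUnit x) → l'.Pairwise τ → l'.length ≤ l.length

theorem IsTauComplete.isTauRigid {b : R} {c : List R} (h : IsTauComplete τ b c) :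
    IsTauRigid τ c := by
  intro l' hr hnu hpw
  refine h.2 l' hr ⟨?_, hnu, hpw, ?_⟩
  · exact List.ne_nil_of_length_pos <| (List.length_pos_iff.mpr h.1.1).trans_le hr.length_le
  · obtain ⟨u, hu⟩ := h.1.2.2.2
    obtain ⟨v, hv⟩ := hr.exists_prod_eq_unit_mul
    exact ⟨u * v, by rw [hu, hv, Units.val_mul, mul_assoc]⟩

theorem IsTauRigid.append {l₁ l₂ : List R} (h₁ : IsTauRigid τ l₁) (h₂ : IsTauRigid τ l₂) :
    IsTauRigid τ (l₁ ++ l₂) := by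
  intro l' hr hnu hpw
  obtain ⟨l₁', l₂', rfl, hr₁, hr₂⟩ := isRefinement_append_left_iff.mp hr
  obtain ⟨hpw₁, hpw₂, -⟩ := List.pairwise_append.mp hpw
  have := h₁ l₁' hr₁ (fun x hx => hnu x (List.mem_append_left _ hx)) hpw₁
  have := h₂ l₂' hr₂ (fun x hx => hnu x (List.mem_append_right _ hx)) hpw₂
  simp only [List.length_append]
  omega

theorem isTauRigid_flatten {C : List (List R)} (h : ∀ c ∈ C, IsTauRigid τ c) :
    IsTauRigid τ C.flatten := by
  induction C with
  | nil =>
    rintro l' ⟨M, hM, rfl⟩ - -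
    cases hM
    exact le_rfl
  | cons c C ih =>
    exact (h c List.mem_cons_self).append (ih fun c' hc' => h c' (List.mem_cons_of_mem _ hc'))

theorem IsTauFact.exists_isTauComplete_length_le (href : Refinable τ)
    (hcompl : ∀ a : R, ¬ IsUnit a → ∃ l, IsTauComplete τ a l) {a : R} {l : List R}
    (hl : IsTauFact τ a l) : ∃ l', IsTauComplete τ a l' ∧ l.length ≤ l'.length := by
  choose! f hf using hcompl
  have hC : List.Forall₂ (fun b c => IsTauComplete τ b c) l (l.map f) :=
    List.forall₂_map_right_iff.mpr <| List.forall₂_same.mpr fun b hb => hf b (hl.2.1 b hb)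
  have hr : IsRefinement τ l (l.map f).flatten := ⟨_, hC.imp fun _ _ h => h.1, rfl⟩
  have hrigid : IsTauRigid τ (l.map f).flatten := isTauRigid_flatten <| by
    simp only [List.mem_map]
    rintro _ ⟨b, hb, rfl⟩
    exact (hf b (hl.2.1 b hb)).isTauRigid
  refine ⟨_, ⟨href a l _ hl hr, fun l' hr' hl' => ?_⟩, hr.length_le⟩
  exact hrigid l' hr' hl'.2.1 hl'.2.2.1

theorem IsTauFact.exists_replace_mem (href : Refinable τ) {x b c : R} {l m : List R}
    (hl : IsTauFact τ x l) (hb : b ∈ l) (hm : IsTauFact τ b m) (hc : c ∈ m) :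
    ∃ l', IsTauFact τ x l' ∧ c ∈ l' ∧ l.length + m.length = l'.length + 1 := by
  obtain ⟨l₁, l₂, rfl⟩ := List.append_of_mem hb
  have hnu : ∀ y ∈ l₁ ++ b :: l₂, ¬ IsUnit y := hl.2.1
  have hr : IsRefinement τ (l₁ ++ ([b] ++ l₂)) (l₁ ++ (m ++ l₂)) :=
    isRefinement_append_left_iff.mpr ⟨_, _, rfl,
      IsRefinement.refl fun y hy => hnu y (by simp [hy]),
      isRefinement_append_left_iff.mpr ⟨_, _, rfl, IsRefinement.of_isTauFact hm,
        IsRefinement.refl fun y hy => hnu y (by simp [hy])⟩⟩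
  refine ⟨l₁ ++ (m ++ l₂), href x _ _ hl hr, by simp [hc], ?_⟩
  simp only [List.length_append, List.length_cons]
  omega

section Chain

variable (href : Refinable τ) {a : ℕ → R}
  (hfac : ∀ i, ∃ l, IsTauFact τ (a i) l ∧ a (i + 1) ∈ l)
include href hfac

theorem exists_isTauFact_mem_of_le {x : R} {l : List R} {n k : ℕ} (hl : IsTauFact τ x l)
    (hn : a n ∈ l) (hnk : n ≤ k) : ∃ l', IsTauFact τ x l' ∧ a k ∈ l' ∧ l.length ≤ l'.length := by
  induction k, hnk using Nat.le_induction with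
  | base => exact ⟨l, hl, hn, le_rfl⟩
  | succ k _ ih =>
    obtain ⟨l', hl', hk, hlen⟩ := ih
    obtain ⟨m, hm, hmem⟩ := hfac k
    obtain ⟨l'', hl'', hmem'', hlen''⟩ := hl'.exists_replace_mem href hk hm hmem
    have := List.length_pos_iff.mpr hm.1
    exact ⟨l'', hl'', hmem'', by omega⟩

theorem exists_forall_span_le_of_length_le {N : ℕ}
    (hN : ∀ l, IsTauFact τ (a 0) l → l.length ≤ N) :
    ∃ M, ∀ i, M ≤ i → Ideal.span {a (i + 1)} ≤ Ideal.span {a i} := by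
  by_contra! hstrict
  have hlong : ∀ k, ∃ n l, IsTauFact τ (a 0) l ∧ a n ∈ l ∧ k < l.length := by
    intro k
    induction k with
    | zero =>
      exact ⟨0, _, IsTauFact.singleton (hfac 0).choose_spec.1.not_isUnit,
        List.mem_singleton_self _, Nat.zero_lt_one⟩
    | succ k ih =>
      obtain ⟨n, l, hl, hn, hk⟩ := ih
      obtain ⟨i, hni, hi⟩ := hstrict n
      obtain ⟨l', hl', hi', hlen'⟩ := exists_isTauFact_mem_of_le href hfac hl hn hni
      obtain ⟨m, hm, hmem⟩ := hfac i
      obtain ⟨l'', hl'', hmem'', hlen''⟩ := hl'.exists_replace_mem href hi' hm hmem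
      have := hm.two_le_length hmem hi
      exact ⟨i + 1, l'', hl'', hmem'', by omega⟩
  obtain ⟨_, l, hl, -, hlen⟩ := hlong N
  exact (hN l hl).not_gt hlen

end Chain

theorem stmt14_general (τ : R → R → Prop) (href : Refinable τ)
    (hcompl : ∀ a : R, ¬ IsUnit a → ∃ l, IsTauComplete τ a l)
    (hbfr : ∀ a : R, ¬ IsUnit a → ∃ N : ℕ, ∀ l, IsTauComplete τ a l → l.length ≤ N) :
    ∀ a : ℕ → R,
      (∀ i, Ideal.span {a i} ≤ Ideal.span {a (i + 1)}) →
      (∀ i, ∃ l, IsTauFact τ (a i) l ∧ a (i + 1) ∈ l) →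
      ∃ N : ℕ, ∀ i, N ≤ i → Ideal.span {a i} = Ideal.span {a N} := by
  intro a hle hfac
  obtain ⟨N, hN⟩ := hbfr (a 0) (hfac 0).choose_spec.1.not_isUnit
  have hbound : ∀ l, IsTauFact τ (a 0) l → l.length ≤ N := fun l hl =>
    let ⟨_, hc, hlen⟩ := hl.exists_isTauComplete_length_le href hcompl
    hlen.trans (hN _ hc)
  obtain ⟨M, hM⟩ := exists_forall_span_le_of_length_le href hfac hbound
  refine ⟨M, fun i hi => ?_⟩
  induction i, hi using Nat.le_induction with
  | base => rfl
  | succ i hMi ih => rw [← ih]; exact le_antisymm (hM i hMi) (hle i)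

theorem stmt14 (τ : R → R → Prop) (hsym : Symmetric τ) (href : Refinable τ)
    (hcompl : ∀ a : R, ¬ IsUnit a → ∃ l, IsTauComplete τ a l)
    (hbfr : ∀ a : R, ¬ IsUnit a → ∃ N : ℕ, ∀ l, IsTauComplete τ a l → l.length ≤ N) :
    ∀ a : ℕ → R,
      (∀ i, Ideal.span {a i} ≤ Ideal.span {a (i + 1)}) →
      (∀ i, ∃ l, IsTauFact τ (a i) l ∧ a (i + 1) ∈ l) →
      ∃ N : ℕ, ∀ i, N ≤ i → Ideal.span {a i} = Ideal.span {a N} :=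
  stmt14_general τ href hcompl hbfr
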